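/- For fixed binary vector τ ∈ {0,1}^n, fixed ρ with ρ^− ≤ ρ ≤ ρ^+ (componentwise, ρ^− ≤ 0 ≤ ρ^+), and Δ_n = x_n^+ − x_n^− ≥ 0, the maximum of Σ_n t_n subject to t_n ≤ τ_n ρ_n^+ Δ_n and t_n ≤ (ρ_n − (1 − τ_n) ρ_n^−) Δ_n equals Σ_n min(τ_n ρ_n^+ Δ_n, (ρ_n − (1 − τ_n) ρ_n^−) Δ_n), and maximizing additionally over τ ∈ {0,1}^n yields Σ_n max(ρ_n, 0) Δ_n. -/
import Mathlib


/-- For fixed binary `τ ∈ {0,1}^n`, the maximum of `∑ t n` subject to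
`t n ≤ τ n * ρ⁺ n * Δ n` and `t n ≤ (ρ n - (1 - τ n) * ρ⁻ n) * Δ n` equals
`∑ min(τ n * ρ⁺ n * Δ n, (ρ n - (1 - τ n) * ρ⁻ n) * Δ n)`; maximizing additionally
over `τ ∈ {0,1}^n` yields `∑ max(ρ n, 0) * Δ n`. -/
theorem stmt19 (n : ℕ) (ρ ρm ρp Δ : Fin n → ℝ)
    (h1 : ∀ i, ρm i ≤ ρ i) (h2 : ∀ i, ρ i ≤ ρp i)
    (h3 : ∀ i, ρm i ≤ 0) (h4 : ∀ i, 0 ≤ ρp i) (hΔ : ∀ i, 0 ≤ Δ i) :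
    (∀ τ : Fin n → ℝ, (∀ i, τ i = 0 ∨ τ i = 1) →
      IsGreatest {s | ∃ t : Fin n → ℝ,
          (∀ i, t i ≤ τ i * ρp i * Δ i ∧ t i ≤ (ρ i - (1 - τ i) * ρm i) * Δ i) ∧
          s = ∑ i, t i}
        (∑ i, min (τ i * ρp i * Δ i) ((ρ i - (1 - τ i) * ρm i) * Δ i))) ∧
    IsGreatest {s | ∃ τ : Fin n → ℝ, (∀ i, τ i = 0 ∨ τ i = 1) ∧
        s = ∑ i, min (τ i * ρp i * Δ i) ((ρ i - (1 - τ i) * ρm i) * Δ i)}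
      (∑ i, max (ρ i) 0 * Δ i) := by
  constructor
  · intro τ hτ
    constructor
    · exact ⟨fun i => min (τ i * ρp i * Δ i) ((ρ i - (1 - τ i) * ρm i) * Δ i),
        fun i => ⟨min_le_left _ _, min_le_right _ _⟩, rfl⟩
    · rintro s ⟨t, ht, rfl⟩
      exact Finset.sum_le_sum fun i _ => le_min (ht i).1 (ht i).2
  · constructor
    · refine ⟨fun i => if 0 ≤ ρ i then 1 else 0,
        fun i => by by_cases h : 0 ≤ ρ i <;> simp [h], ?_⟩
      refine Finset.sum_congr rfl fun i _ => ?_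
      by_cases h : 0 ≤ ρ i
      · simp only [if_pos h]
        rw [max_eq_left h]
        have : min (1 * ρp i * Δ i) ((ρ i - (1 - 1) * ρm i) * Δ i) = ρ i * Δ i := by
          rw [min_eq_right]
          · ring_nf
          · nlinarith [h2 i, hΔ i]
        rw [this]
      · simp only [if_neg h]
        rw [max_eq_right (le_of_not_ge h)]
        have : min (0 * ρp i * Δ i) ((ρ i - (1 - 0) * ρm i) * Δ i) = 0 := by
          rw [min_eq_left]
          · ring
          · nlinarith [h1 i, hΔ i]
        rw [this]; ring
    · rintro s ⟨τ, hτ, rfl⟩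
      refine Finset.sum_le_sum fun i _ => ?_
      rcases hτ i with h | h
      · rw [h]
        calc min (0 * ρp i * Δ i) ((ρ i - (1 - 0) * ρm i) * Δ i)
            ≤ 0 * ρp i * Δ i := min_le_left _ _
          _ = 0 := by ring
          _ ≤ max (ρ i) 0 * Δ i := mul_nonneg (le_max_right _ _) (hΔ i)
      · rw [h]
        calc min (1 * ρp i * Δ i) ((ρ i - (1 - 1) * ρm i) * Δ i)
            ≤ (ρ i - (1 - 1) * ρm i) * Δ i := min_le_right _ _
          _ = ρ i * Δ i := by ring
          _ ≤ max (ρ i) 0 * Δ i := mul_le_mul_of_nonneg_right (le_max_left _ _) (hΔ i)
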